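/- Let k = -1/2 - m with m ∈ ℤ≥0 and consider the A_1 rational Cherednik algebra H'' acting on ℝ[x] via the Dunkl operator. Then the submodule (x^{2m+1}) ⊂ ℝ[x] is a proper nonzero H''-submodule, and the quotient ℝ[x]/(x^{2m+1}) is a (2m+1)-dimensional H''-module on which the trace of s equals 1. -/

import Mathlib

open Polynomial

/-- The A₁ rational Dunkl operator on polynomials. -/
noncomputable def dunkl (k : ℝ) (f : ℝ[X]) : ℝ[X] :=
  derivative f + C k * ((f - f.comp (-X)) /ₘ X)

/-- The reflection `s : f(x) ↦ f(-x)` as an ℝ-linear map on `ℝ[x]`. -/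
noncomputable def reflOp : ℝ[X] →ₗ[ℝ] ℝ[X] :=
  (Polynomial.aeval (-X : ℝ[X])).toLinearMap

/-- The ideal `(x^{2m+1})` viewed as an ℝ-subspace of `ℝ[x]`. -/
noncomputable def radSubmodule (m : ℕ) : Submodule ℝ ℝ[X] :=
  (Ideal.span {(X : ℝ[X]) ^ (2 * m + 1)}).restrictScalars ℝ

lemma coeff_comp_negX (f : ℝ[X]) (i : ℕ) : (f.comp (-X)).coeff i = (-1)^i * f.coeff i := by
  induction f using Polynomial.induction_on' with
  | add p q hp hq => simp [add_comp, hp, hq, mul_add]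
  | monomial n a =>
    have : ((monomial n a : ℝ[X]).comp (-X)) = C ((-1)^n * a) * X ^ n := by
      rw [monomial_comp]; simp only [C_mul, C_pow, map_neg, map_one]; ring
    rw [this, coeff_C_mul, coeff_X_pow, coeff_monomial]
    rcases eq_or_ne n i with rfl | h
    · simp
    · simp [h, Ne.symm h]

lemma coeff_odd_div (f : ℝ[X]) (i : ℕ) :
    ((f - f.comp (-X)) /ₘ X).coeff i = (1 - (-1)^(i+1)) * f.coeff (i+1) := by
  set g : ℝ[X] := f - f.comp (-X) with hg
  have hdvd : X ∣ g := by
    rw [X_dvd_iff]; simp [hg, coeff_comp_negX]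
  obtain ⟨q, hq⟩ := hdvd
  rw [hq, mul_divByMonic_cancel_left _ monic_X]
  have h2 : g.coeff (i+1) = q.coeff i := by rw [hq, coeff_X_mul]
  rw [← h2, hg]
  simp only [coeff_sub, coeff_comp_negX]
  ring

lemma coeff_dunkl (k : ℝ) (f : ℝ[X]) (i : ℕ) :
    (dunkl k f).coeff i = ((i+1 : ℝ) + k * (1 - (-1)^(i+1))) * f.coeff (i+1) := by
  rw [dunkl, coeff_add, coeff_derivative, coeff_C_mul, coeff_odd_div]
  ring

lemma mem_rad (m : ℕ) (f : ℝ[X]) : f ∈ radSubmodule m ↔ ∀ i < 2*m+1, f.coeff i = 0 := by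
  rw [radSubmodule, Submodule.restrictScalars_mem, Ideal.mem_span_singleton,
    ← X_pow_dvd_iff]

lemma reflOp_apply (f : ℝ[X]) : reflOp f = f.comp (-X) := by
  simp [reflOp, comp, aeval_def, eval₂_eq_sum]

lemma isCompl_rad (m : ℕ) : IsCompl (radSubmodule m) (degreeLT ℝ (2*m+1)) := by
  constructor
  · rw [disjoint_iff_inf_le]
    rintro f ⟨h1, h2⟩
    simp only [SetLike.mem_coe] at h1 h2
    rw [mem_rad] at h1
    rw [Submodule.mem_bot]
    rw [mem_degreeLT] at h2
    ext i
    rcases lt_or_ge i (2*m+1) with h | h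
    · simp [h1 i h]
    · simp only [coeff_zero]
      apply coeff_eq_zero_of_degree_lt
      exact lt_of_lt_of_le h2 (by exact_mod_cast h)
  · rw [codisjoint_iff_le_sup]
    intro f _
    have hmon : Monic ((X : ℝ[X]) ^ (2*m+1)) := monic_X_pow _
    have := modByMonic_add_div f (X ^ (2*m+1))
    refine Submodule.mem_sup.mpr ⟨X ^ (2*m+1) * (f /ₘ X ^ (2*m+1)), ?_, f %ₘ X ^ (2*m+1), ?_, ?_⟩
    · rw [mem_rad, ← X_pow_dvd_iff]
      exact Dvd.intro _ rfl
    · rw [mem_degreeLT]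
      exact lt_of_lt_of_le (degree_modByMonic_lt f hmon) (by simp [degree_X_pow])
    · rw [add_comm]; exact this

noncomputable def quotEquiv (m : ℕ) : (ℝ[X] ⧸ radSubmodule m) ≃ₗ[ℝ] degreeLT ℝ (2*m+1) :=
  Submodule.quotientEquivOfIsCompl _ _ (isCompl_rad m)

noncomputable def quotBasis (m : ℕ) : Module.Basis (Fin (2*m+1)) ℝ (ℝ[X] ⧸ radSubmodule m) :=
  ((Pi.basisFun ℝ (Fin (2*m+1))).map (degreeLTEquiv ℝ (2*m+1)).symm).map (quotEquiv m).symm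

lemma quotBasis_apply (m : ℕ) (j : Fin (2*m+1)) :
    quotBasis m j = Submodule.Quotient.mk (X^(j:ℕ) : ℝ[X]) := by
  have hmem : (X^(j:ℕ) : ℝ[X]) ∈ degreeLT ℝ (2*m+1) := by
    rw [mem_degreeLT, degree_X_pow]
    exact_mod_cast j.2
  have h1 : (degreeLTEquiv ℝ (2*m+1)).symm (Pi.basisFun ℝ (Fin (2*m+1)) j)
      = ⟨X^(j:ℕ), hmem⟩ := by
    apply (degreeLTEquiv ℝ (2*m+1)).injective
    rw [LinearEquiv.apply_symm_apply]
    funext i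
    simp only [degreeLTEquiv, LinearEquiv.coe_mk, Pi.basisFun_apply]
    change (Pi.single j (1:ℝ) : Fin (2*m+1) → ℝ) i = (X^(j:ℕ) : ℝ[X]).coeff i
    rw [coeff_X_pow]
    rcases eq_or_ne i j with rfl | h
    · simp
    · rw [Pi.single_apply, if_neg h, if_neg (fun hc => h (Fin.ext hc))]
  simp only [quotBasis, Module.Basis.map_apply, h1]
  rw [quotEquiv, Submodule.quotientEquivOfIsCompl_symm_apply]

/-- For `k = -1/2 - m`, the ideal `(x^{2m+1}) ⊂ ℝ[x]` is a proper nonzero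
`H''`-submodule (invariant under `x`, `s`, `y = D/2`), and the quotient
`ℝ[x]/(x^{2m+1})` is a `(2m+1)`-dimensional module on which `s` has trace `1`. -/
theorem singular_quotient_module (m : ℕ) (k : ℝ) (hk : k = -(1/2) - m) :
    radSubmodule m ≠ ⊥ ∧ radSubmodule m ≠ ⊤ ∧
    (∀ f ∈ radSubmodule m, X * f ∈ radSubmodule m) ∧
    (∀ f ∈ radSubmodule m, reflOp f ∈ radSubmodule m) ∧
    (∀ f ∈ radSubmodule m, (1/2 : ℝ) • dunkl k f ∈ radSubmodule m) ∧
    Module.finrank ℝ (ℝ[X] ⧸ radSubmodule m) = 2 * m + 1 ∧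
    ∀ h : radSubmodule m ≤ (radSubmodule m).comap reflOp,
      LinearMap.trace ℝ (ℝ[X] ⧸ radSubmodule m)
        (Submodule.mapQ (radSubmodule m) (radSubmodule m) reflOp h) = 1 := by
  refine ⟨?_, ?_, ?_, ?_, ?_, ?_, ?_⟩
  · -- ≠ ⊥
    rw [Submodule.ne_bot_iff]
    refine ⟨X ^ (2*m+1), ?_, pow_ne_zero _ X_ne_zero⟩
    rw [mem_rad]
    intro i hi
    rw [coeff_X_pow, if_neg (by omega)]
  · -- ≠ ⊤
    intro htop
    have h1 : (1 : ℝ[X]) ∈ radSubmodule m := htop ▸ Submodule.mem_top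
    have := (mem_rad m 1).mp h1 0 (by omega)
    simp at this
  · -- X * f
    intro f hf
    rw [mem_rad] at hf ⊢
    intro i hi
    cases i with
    | zero => simp
    | succ i => rw [coeff_X_mul]; exact hf i (by omega)
  · -- reflOp
    intro f hf
    rw [mem_rad] at hf ⊢
    intro i hi
    rw [reflOp_apply, coeff_comp_negX, hf i hi, mul_zero]
  · -- dunkl
    intro f hf
    rw [mem_rad] at hf ⊢
    intro i hi
    rw [coeff_smul, coeff_dunkl]
    rcases lt_or_ge (i+1) (2*m+1) with h | h
    · rw [hf _ h, mul_zero, smul_zero]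
    · have hi' : i = 2*m := by omega
      subst hi'
      have hodd : (-1 : ℝ) ^ (2*m+1) = -1 := Odd.neg_one_pow ⟨m, by ring⟩
      rw [hodd, hk]
      push_cast
      ring_nf
  · -- finrank
    rw [Module.finrank_eq_card_basis (quotBasis m), Fintype.card_fin]
  · -- trace
    intro h
    rw [LinearMap.trace_eq_matrix_trace ℝ (quotBasis m), Matrix.trace]
    have hdiag : ∀ j : Fin (2*m+1),
        (LinearMap.toMatrix (quotBasis m) (quotBasis m)
          (Submodule.mapQ (radSubmodule m) (radSubmodule m) reflOp h)).diag j
          = (-1 : ℝ)^(j:ℕ) := by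
      intro j
      have happ : Submodule.mapQ (radSubmodule m) (radSubmodule m) reflOp h (quotBasis m j)
          = ((-1:ℝ)^(j:ℕ)) • quotBasis m j := by
        rw [quotBasis_apply, Submodule.mapQ_apply, reflOp_apply, X_pow_comp]
        have : ((-X : ℝ[X]))^(j:ℕ) = ((-1:ℝ)^(j:ℕ)) • X^(j:ℕ) := by
          rw [neg_pow]
          simp [smul_eq_C_mul, C_pow, map_neg, map_one]
        rw [this, ← Submodule.Quotient.mk_smul]
      rw [Matrix.diag_apply, LinearMap.toMatrix_apply, happ, map_smul]
      simp [Module.Basis.repr_self]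
    rw [Finset.sum_congr rfl (fun j _ => hdiag j)]
    rw [Fin.sum_univ_eq_sum_range (fun i => (-1:ℝ)^i)]
    rw [neg_one_geom_sum, if_neg (by simp [Nat.even_add_one, Nat.even_mul])]
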